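/- arXiv:1011.4698 — 3 statements merged into one kernel-verified Lean document; each statement's English description precedes it below -/
import Mathlib

section
/- J : (J : I) = I; for every ℓ with 2 ≤ ℓ ≤ n one has J : (J : I^ℓ) = (x^ℓ, xy, y², z₁, …, z_r); and J : (J : I^{n+1}) = J. -/
/-!
Write `x = X a`, `y = X b` and `z` for the other variables. Every `f ∈ J = (y² + xⁿ, xy, z)` has
vanishing coefficients at `xⁱ` for `i < n` and equal coefficients at `xⁿ` and `y²`, since only
`y² + xⁿ` contributes to them. Conversely, an ideal containing `x^p`, `xy`, `y^q` and `z` contains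
every power series whose coefficients at `xⁱ` (`i < p`) and `yʲ` (`0 < j < q`) vanish. Testing
`f ∈ J : K` on `f x^m` and `f y` therefore computes colon ideals coefficientwise: for
`m + ℓ = n + 1`, `J : (x^m, y, z) = (x^ℓ, xy, y², z)`; for `ℓ ≥ 2` this ideal contains `I^ℓ`
(an order count) and its product with `(x^m, y, z)` lies in `J`, so `J : I^ℓ = (x^m, y, z)`.
For `ℓ = 1`, the element `xⁿ` of `J : I` kills constant terms, and for `ℓ = n + 1` the order
count gives `I^{n+1} ⊆ J`.
-/

open Finsupp

namespace Ideal

variable {A : Type*} [CommSemiring A]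

theorem le_colon_colon (I J : Ideal A) : I ≤ J.colon (J.colon (I : Set A) : Set A) :=
  fun f hf => Submodule.mem_colon.2 fun g hg => by
    simpa [mul_comm] using Submodule.mem_colon.1 hg f hf

theorem le_colon_of_mul_le {I J K : Ideal A} (h : I * K ≤ J) : I ≤ J.colon (K : Set A) :=
  fun _ hf => Submodule.mem_colon.2 fun _ hg => h (mul_mem_mul hf hg)

theorem map_eq_zero_of_mem_span {M F : Type*} [AddCommMonoid M] [FunLike F A M]
    [AddMonoidHomClass F A M] (φ : F) {T : Set A} (hT : ∀ t ∈ T, ∀ g, φ (g * t) = 0) {f : A}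
    (hf : f ∈ span T) : φ f = 0 := by
  suffices ∀ g, φ (g * f) = 0 by simpa using this 1
  induction hf using Submodule.span_induction with
  | mem t ht => exact hT t ht
  | zero => simp
  | add u v _ _ hu hv => intro g; rw [mul_add, map_add, hu, hv, add_zero]
  | smul c u _ hu => intro g; rw [smul_eq_mul, ← mul_assoc]; exact hu _

end Ideal

theorem Finsupp.eq_single_of_forall_ne {α M : Type*} [Zero M] {f : α →₀ M} {a : α}
    (h : ∀ v, v ≠ a → f v = 0) : f = single a (f a) :=
  support_subset_singleton.1 fun v hv =>
    Finset.mem_singleton.2 (by_contra fun hva => mem_support_iff.1 hv (h v hva))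

namespace MvPowerSeries

variable {σ R : Type*}

section CommSemiring

variable [CommSemiring R]

theorem coeff_single_mul_X_pow (f : MvPowerSeries σ R) (a : σ) (i m : ℕ) :
    coeff (single a i) (f * X a ^ m) = if m ≤ i then coeff (single a (i - m)) f else 0 := by
  simp only [X_pow_eq, coeff_mul_monomial, single_le_single, ← single_tsub, mul_one]

theorem coeff_single_mul_X_pow_of_ne {a v : σ} (h : v ≠ a) {m : ℕ} (hm : m ≠ 0)
    (f : MvPowerSeries σ R) (i : ℕ) : coeff (single a i) (f * X v ^ m) = 0 := by
  rw [X_pow_eq, coeff_mul_monomial, if_neg (by rw [single_le_iff, single_eq_of_ne h]; omega)]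

theorem coeff_single_mul_X_of_ne {a v : σ} (h : v ≠ a) (f : MvPowerSeries σ R) (i : ℕ) :
    coeff (single a i) (f * X v) = 0 := by
  simpa using coeff_single_mul_X_pow_of_ne h one_ne_zero f i

theorem le_order_of_mem_pow {I : Ideal (MvPowerSeries σ R)}
    (hI : ∀ f ∈ I, constantCoeff f = 0) {ℓ : ℕ} {f : MvPowerSeries σ R} (hf : f ∈ I ^ ℓ) :
    (ℓ : ℕ∞) ≤ f.order := by
  induction ℓ generalizing f with
  | zero => simp
  | succ ℓ ih =>
    rw [pow_succ'] at hf
    refine Submodule.mul_induction_on hf (fun g hg h hh => ?_) fun u v hu hv =>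
      (le_min hu hv).trans min_order_le_add
    calc ((ℓ + 1 : ℕ) : ℕ∞) = 1 + ℓ := by push_cast; ring
      _ ≤ g.order + h.order :=
        add_le_add (one_le_order_iff_constCoeff_eq_zero.2 (hI g hg)) (ih hh)
      _ ≤ (g * h).order := le_order_mul

end CommSemiring

variable [CommRing R]

theorem mem_of_monomial_mem_of_coeff_eq_zero {W : Ideal (MvPowerSeries σ R)} (s : Finset (σ →₀ ℕ))
    (hs : ∀ d ∈ s, monomial d (1 : R) ∈ W) {f : MvPowerSeries σ R}
    (hf : ∀ e, (∀ d ∈ s, ¬ d ≤ e) → coeff e f = 0) : f ∈ W := by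
  classical
  induction s using Finset.induction_on generalizing f with
  | empty => simp [show f = 0 from ext fun e => by simpa using hf e]
  | insert d s _ ih =>
    -- `q` is `f` divided by the monomial `d`, discarding the terms it does not divide
    let q : MvPowerSeries σ R := fun e => coeff (e + d) f
    rw [show f = (f - q * monomial d 1) + q * monomial d 1 by ring]
    refine W.add_mem (ih (fun d' hd' => hs d' (Finset.mem_insert_of_mem hd')) fun e he => ?_)
      (W.mul_mem_left q (hs d (Finset.mem_insert_self d s)))
    rw [map_sub, coeff_mul_monomial]
    split_ifs with hde
    · rw [mul_one, sub_eq_zero]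
      exact congrArg (coeff · f) (tsub_add_cancel_of_le hde).symm
    · rw [sub_zero]
      exact hf e (Finset.forall_mem_insert _ _ _ |>.2 ⟨hde, he⟩)

variable {a b : σ}

theorem mem_of_coeff_single_eq_zero [Finite σ] (hab : a ≠ b) {W : Ideal (MvPowerSeries σ R)}
    {p q : ℕ} (hx : X a ^ p ∈ W) (hxy : X a * X b ∈ W) (hy : X b ^ q ∈ W)
    (hz : X '' {a, b}ᶜ ⊆ (W : Set (MvPowerSeries σ R))) {f : MvPowerSeries σ R}
    (hfx : ∀ i < p, coeff (single a i) f = 0)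
    (hfy : ∀ j < q, j ≠ 0 → coeff (single b j) f = 0) :
    f ∈ W := by
  classical
  have := Fintype.ofFinite σ
  refine mem_of_monomial_mem_of_coeff_eq_zero ({single a p, single a 1 + single b 1, single b q} ∪
    (Finset.univ \ {a, b}).image (single · 1)) ?_ fun e he => ?_
  · simp only [Finset.mem_union, Finset.mem_insert, Finset.mem_singleton, Finset.mem_image,
      Finset.mem_sdiff, Finset.mem_univ, true_and]
    rintro d ((rfl | rfl | rfl) | ⟨v, hv, rfl⟩)
    · rwa [← X_pow_eq]
    · rwa [X_def, X_def, monomial_mul_monomial, one_mul] at hxy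
    · rwa [← X_pow_eq]
    · exact X_def (R := R) v ▸ hz ⟨v, by simpa using hv, rfl⟩
  · have hea : e a < p := by simpa [single_le_iff] using he (single a p) (by simp)
    have heb : e b < q := by simpa [single_le_iff] using he (single b q) (by simp)
    have he_other : ∀ v, v ≠ a → v ≠ b → e v = 0 := fun v hva hvb => by
      simpa [single_le_iff] using he (single v 1)
        (Finset.mem_union_right _ (Finset.mem_image_of_mem _ (by simp [hva, hvb])))
    by_cases h : e b = 0
    · rw [eq_single_of_forall_ne fun v hva => if hvb : v = b then hvb ▸ h else he_other v hva hvb]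
      exact hfx _ hea
    · have ha : e a = 0 := by
        by_contra ha
        refine he (single a 1 + single b 1) (by simp) fun v => ?_
        by_cases hva : v = a <;> by_cases hvb : v = b <;> simp_all <;> omega
      rw [eq_single_of_forall_ne fun v hvb => if hva : v = a then hva ▸ ha else he_other v hva hvb]
      exact hfy _ heb h

variable (R) in
noncomputable def coordIdeal (a b : σ) : Ideal (MvPowerSeries σ R) :=
  Ideal.span ({X a, X b} ∪ X '' {a, b}ᶜ)

variable (R) in
noncomputable def cuspIdeal (a b : σ) (n : ℕ) : Ideal (MvPowerSeries σ R) :=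
  Ideal.span ({X b ^ 2 + X a ^ n, X a * X b} ∪ X '' {a, b}ᶜ)

variable {n : ℕ}

theorem X_mul_X_mem_cuspIdeal : X a * X b ∈ cuspIdeal R a b n :=
  Ideal.subset_span (by simp)

theorem image_X_subset_cuspIdeal : X '' {a, b}ᶜ ⊆ (cuspIdeal R a b n : Set (MvPowerSeries σ R)) :=
  fun _ h => Ideal.subset_span (Or.inr h)

theorem X_pow_succ_mem_cuspIdeal : X a ^ (n + 1) ∈ cuspIdeal R a b n := by
  have hgen : X b ^ 2 + X a ^ n ∈ cuspIdeal R a b n := Ideal.subset_span (by simp)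
  rw [show X a ^ (n + 1) = X a * (X b ^ 2 + X a ^ n) - X b * (X a * X b) by ring]
  exact sub_mem (Ideal.mul_mem_left _ _ hgen) (Ideal.mul_mem_left _ _ X_mul_X_mem_cuspIdeal)

theorem X_pow_three_mem_cuspIdeal (hn : n ≠ 0) : X b ^ 3 ∈ cuspIdeal R a b n := by
  obtain ⟨n, rfl⟩ := Nat.exists_eq_succ_of_ne_zero hn
  have hgen : X b ^ 2 + X a ^ (n + 1) ∈ cuspIdeal R a b (n + 1) := Ideal.subset_span (by simp)
  rw [show X b ^ 3 = X b * (X b ^ 2 + X a ^ (n + 1)) - X a ^ n * (X a * X b) by ring]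
  exact sub_mem (Ideal.mul_mem_left _ _ hgen) (Ideal.mul_mem_left _ _ X_mul_X_mem_cuspIdeal)

theorem coeff_single_eq_zero_of_mem_cuspIdeal (hab : a ≠ b) {f : MvPowerSeries σ R}
    (hf : f ∈ cuspIdeal R a b n) {i : ℕ} (hi : i < n) : coeff (single a i) f = 0 := by
  refine Ideal.map_eq_zero_of_mem_span _ ?_ hf
  rintro t ((rfl | rfl) | ⟨v, hv, rfl⟩) g
  · rw [mul_add, map_add, coeff_single_mul_X_pow_of_ne hab.symm two_ne_zero,
      coeff_single_mul_X_pow, if_neg (by omega), add_zero]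
  · rw [← mul_assoc, coeff_single_mul_X_of_ne hab.symm]
  · exact coeff_single_mul_X_of_ne (by rintro rfl; simp at hv) g i

theorem coeff_single_eq_coeff_single_of_mem_cuspIdeal (hab : a ≠ b) (hn : n ≠ 0)
    {f : MvPowerSeries σ R} (hf : f ∈ cuspIdeal R a b n) :
    coeff (single a n) f = coeff (single b 2) f := by
  rw [← sub_eq_zero, ← LinearMap.sub_apply]
  refine Ideal.map_eq_zero_of_mem_span _ ?_ hf
  rintro t ((rfl | rfl) | ⟨v, hv, rfl⟩) g
  · simp [mul_add, coeff_single_mul_X_pow, coeff_single_mul_X_pow_of_ne hab hn,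
      coeff_single_mul_X_pow_of_ne hab.symm two_ne_zero]
  · rw [LinearMap.sub_apply, ← mul_assoc, coeff_single_mul_X_of_ne hab.symm, mul_right_comm,
      coeff_single_mul_X_of_ne hab, sub_zero]
  · have hva : v ≠ a := by rintro rfl; simp at hv
    have hvb : v ≠ b := by rintro rfl; simp at hv
    rw [LinearMap.sub_apply, coeff_single_mul_X_of_ne hva, coeff_single_mul_X_of_ne hvb, sub_zero]

theorem coeff_single_eq_zero_of_mul_X_pow_mem (hab : a ≠ b) {f : MvPowerSeries σ R} {m i : ℕ}
    (hf : f * X a ^ m ∈ cuspIdeal R a b n) (hm : m ≠ 0) (hi : i + m ≤ n) :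
    coeff (single a i) f = 0 := by
  have h := coeff_single_mul_X_pow f a (i + m) m
  rw [if_pos (by omega), Nat.add_sub_cancel] at h
  rw [← h]
  rcases hi.lt_or_eq with hi | rfl
  · exact coeff_single_eq_zero_of_mem_cuspIdeal hab hf hi
  · rw [coeff_single_eq_coeff_single_of_mem_cuspIdeal hab (by omega) hf,
      coeff_single_mul_X_pow_of_ne hab hm]

theorem coeff_single_one_eq_zero_of_mul_X_mem (hab : a ≠ b) (hn : n ≠ 0)
    {f : MvPowerSeries σ R} (hf : f * X b ∈ cuspIdeal R a b n) : coeff (single b 1) f = 0 := by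
  have h := coeff_single_mul_X_pow f b 2 1
  rw [pow_one, if_pos one_le_two] at h
  rw [← h, ← coeff_single_eq_coeff_single_of_mem_cuspIdeal hab hn hf,
    coeff_single_mul_X_of_ne hab.symm]

theorem coeff_single_eq_zero_of_mem_coordIdeal_pow {ℓ : ℕ} {f : MvPowerSeries σ R}
    (hf : f ∈ coordIdeal R a b ^ ℓ) (v : σ) {i : ℕ} (hi : i < ℓ) : coeff (single v i) f = 0 := by
  have hdeg : ((degree (single v i) : ℕ) : ℕ∞) < ℓ := by simpa [degree_single] using hi
  refine coeff_of_lt_order (hdeg.trans_le (le_order_of_mem_pow ?_ hf))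
  intro g hg
  refine Ideal.map_eq_zero_of_mem_span constantCoeff ?_ hg
  rintro t ((rfl | rfl) | ⟨v, -, rfl⟩) g <;> simp

theorem coordIdeal_pow_le [Finite σ] (hab : a ≠ b) {ℓ : ℕ} (hℓ : 2 ≤ ℓ) :
    coordIdeal R a b ^ ℓ ≤ Ideal.span ({X a ^ ℓ, X a * X b, X b ^ 2} ∪ X '' {a, b}ᶜ) :=
  fun _ hf => by
    refine mem_of_coeff_single_eq_zero hab (p := ℓ) (q := 2)
      (Ideal.subset_span (Or.inl (Or.inl rfl))) (Ideal.subset_span (Or.inl (Or.inr (Or.inl rfl))))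
      (Ideal.subset_span (Or.inl (Or.inr (Or.inr rfl))))
      (fun _ h => Ideal.subset_span (Or.inr h))
      (fun _ hi => coeff_single_eq_zero_of_mem_coordIdeal_pow hf a hi)
      (fun _ hj _ => coeff_single_eq_zero_of_mem_coordIdeal_pow hf b (by omega))

theorem coordIdeal_pow_succ_le_cuspIdeal [Finite σ] (hab : a ≠ b) (hn : 2 ≤ n) :
    coordIdeal R a b ^ (n + 1) ≤ cuspIdeal R a b n :=
  fun _ hf => mem_of_coeff_single_eq_zero hab X_pow_succ_mem_cuspIdeal X_mul_X_mem_cuspIdeal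
    (X_pow_three_mem_cuspIdeal (by omega)) image_X_subset_cuspIdeal
    (fun _ hi => coeff_single_eq_zero_of_mem_coordIdeal_pow hf a hi)
    (fun _ hj _ => coeff_single_eq_zero_of_mem_coordIdeal_pow hf b (by omega))

theorem span_mul_span_le_cuspIdeal {m ℓ : ℕ} (hm : m ≠ 0) (hℓ : ℓ ≠ 0) (h : m + ℓ = n + 1) :
    Ideal.span ({X a ^ m, X b} ∪ X '' {a, b}ᶜ) *
      Ideal.span ({X a ^ ℓ, X a * X b, X b ^ 2} ∪ X '' {a, b}ᶜ) ≤ cuspIdeal R a b n := by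
  rw [Ideal.span_mul_span', Ideal.span_le]
  rintro _ ⟨s, hs, t, ht, rfl⟩
  simp only [SetLike.mem_coe]
  obtain hs | hs := hs
  swap; · exact Ideal.mul_mem_right _ _ (image_X_subset_cuspIdeal hs)
  obtain ht | ht := ht
  swap; · exact Ideal.mul_mem_left _ _ (image_X_subset_cuspIdeal ht)
  obtain ⟨m, rfl⟩ := Nat.exists_eq_add_one_of_ne_zero hm
  obtain ⟨ℓ, rfl⟩ := Nat.exists_eq_add_one_of_ne_zero hℓ
  have hxy : X a * X b ∈ cuspIdeal R a b n := X_mul_X_mem_cuspIdeal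
  rcases hs with rfl | rfl <;> rcases ht with rfl | rfl | rfl
  · rw [← pow_add, h]; exact X_pow_succ_mem_cuspIdeal
  · exact Ideal.mul_mem_left _ _ hxy
  · rw [show X a ^ (m + 1) * X b ^ 2 = X a ^ m * X b * (X a * X b) by ring]
    exact Ideal.mul_mem_left _ _ hxy
  · rw [show X b * X a ^ (ℓ + 1) = X a ^ ℓ * (X a * X b) by ring]
    exact Ideal.mul_mem_left _ _ hxy
  · exact Ideal.mul_mem_left _ _ hxy
  · rw [← pow_succ']; exact X_pow_three_mem_cuspIdeal (by omega)

theorem cuspIdeal_colon_span {m ℓ : ℕ} [Finite σ] (hab : a ≠ b) (hm : m ≠ 0) (hℓ : ℓ ≠ 0)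
    (h : m + ℓ = n + 1) :
    (cuspIdeal R a b n).colon
        ((Ideal.span ({X a ^ m, X b} ∪ X '' {a, b}ᶜ) : Ideal (MvPowerSeries σ R)) : Set _) =
      Ideal.span ({X a ^ ℓ, X a * X b, X b ^ 2} ∪ X '' {a, b}ᶜ) := by
  refine le_antisymm (fun f hf => ?_)
    (Ideal.le_colon_of_mul_le (by rw [mul_comm]; exact span_mul_span_le_cuspIdeal hm hℓ h))
  have hfx : f * X a ^ m ∈ cuspIdeal R a b n :=
    Submodule.mem_colon.1 hf _ (Ideal.subset_span (Or.inl (Or.inl rfl)))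
  have hfy : f * X b ∈ cuspIdeal R a b n :=
    Submodule.mem_colon.1 hf _ (Ideal.subset_span (Or.inl (Or.inr rfl)))
  exact mem_of_coeff_single_eq_zero hab (Ideal.subset_span (Or.inl (Or.inl rfl)))
    (Ideal.subset_span (Or.inl (Or.inr (Or.inl rfl))))
    (Ideal.subset_span (Or.inl (Or.inr (Or.inr rfl)))) (fun _ h => Ideal.subset_span (Or.inr h))
    (fun i hi => coeff_single_eq_zero_of_mul_X_pow_mem hab hfx hm (by omega))
    fun j hj hj0 => (show j = 1 by omega) ▸
      coeff_single_one_eq_zero_of_mul_X_mem hab (by omega) hfy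

theorem cuspIdeal_colon_coordIdeal_pow {ℓ : ℕ} [Finite σ] (hab : a ≠ b) (hℓ : 2 ≤ ℓ)
    (hℓn : ℓ ≤ n) :
    (cuspIdeal R a b n).colon ((coordIdeal R a b ^ ℓ : Ideal _) : Set (MvPowerSeries σ R)) =
      Ideal.span ({X a ^ (n + 1 - ℓ), X b} ∪ X '' {a, b}ᶜ) := by
  refine le_antisymm (fun f hf => ?_) (Ideal.le_colon_of_mul_le ?_)
  · have hx : X a ∈ coordIdeal R a b := Ideal.subset_span (Or.inl (Or.inl rfl))
    have hfx : f * X a ^ ℓ ∈ cuspIdeal R a b n :=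
      Submodule.mem_colon.1 hf _ (Ideal.pow_mem_pow hx ℓ)
    exact mem_of_coeff_single_eq_zero hab (q := 1) (Ideal.subset_span (Or.inl (Or.inl rfl)))
      (Ideal.mul_mem_left _ _ (Ideal.subset_span (Or.inl (Or.inr rfl))))
      (by rw [pow_one]; exact Ideal.subset_span (Or.inl (Or.inr rfl)))
      (fun _ h => Ideal.subset_span (Or.inr h))
      (fun i hi => coeff_single_eq_zero_of_mul_X_pow_mem hab hfx (by omega) (by omega))
      (fun _ _ _ => by omega)
  · exact (Ideal.mul_mono_right (coordIdeal_pow_le hab hℓ)).trans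
      (span_mul_span_le_cuspIdeal (by omega) (by omega) (by omega))

theorem cuspIdeal_colon_colon_coordIdeal_pow {ℓ : ℕ} [Finite σ] (hab : a ≠ b) (hℓ : 2 ≤ ℓ)
    (hℓn : ℓ ≤ n) :
    (cuspIdeal R a b n).colon
      ((cuspIdeal R a b n).colon ((coordIdeal R a b ^ ℓ : Ideal _) : Set (MvPowerSeries σ R)) :
        Set _) =
      Ideal.span ({X a ^ ℓ, X a * X b, X b ^ 2} ∪ X '' {a, b}ᶜ) := by
  rw [cuspIdeal_colon_coordIdeal_pow hab hℓ hℓn,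
    cuspIdeal_colon_span (ℓ := ℓ) hab (by omega) (by omega) (by omega)]

theorem cuspIdeal_colon_colon_coordIdeal [Finite σ] (hab : a ≠ b) (hn : n ≠ 0) :
    (cuspIdeal R a b n).colon ((cuspIdeal R a b n).colon (coordIdeal R a b : Set _) : Set _) =
      coordIdeal R a b := by
  refine le_antisymm (fun f hf => ?_) (Ideal.le_colon_colon _ _)
  have hcoord : coordIdeal R a b = Ideal.span ({X a ^ 1, X b} ∪ X '' {a, b}ᶜ) := by
    rw [pow_one, coordIdeal]
  have hxn : X a ^ n ∈ (cuspIdeal R a b n).colon (coordIdeal R a b : Set _) := by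
    rw [hcoord, cuspIdeal_colon_span hab one_ne_zero hn (add_comm 1 n)]
    exact Ideal.subset_span (Or.inl (Or.inl rfl))
  have hfx : f * X a ^ n ∈ cuspIdeal R a b n := Submodule.mem_colon.1 hf _ hxn
  exact mem_of_coeff_single_eq_zero hab (p := 1) (q := 1)
    (by rw [pow_one]; exact Ideal.subset_span (Or.inl (Or.inl rfl)))
    (Ideal.mul_mem_left _ _ (Ideal.subset_span (Or.inl (Or.inr rfl))))
    (by rw [pow_one]; exact Ideal.subset_span (Or.inl (Or.inr rfl)))
    (fun _ h => Ideal.subset_span (Or.inr h))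
    (fun i hi => coeff_single_eq_zero_of_mul_X_pow_mem hab hfx hn (by omega))
    (fun _ _ _ => by omega)

theorem cuspIdeal_colon_colon_coordIdeal_pow_succ [Finite σ] (hab : a ≠ b) (hn : 2 ≤ n) :
    (cuspIdeal R a b n).colon
      ((cuspIdeal R a b n).colon
        ((coordIdeal R a b ^ (n + 1) : Ideal _) : Set (MvPowerSeries σ R)) : Set _) =
      cuspIdeal R a b n := by
  rw [(Submodule.colon_eq_top_iff_subset _).2 (coordIdeal_pow_succ_le_cuspIdeal hab hn),
    Submodule.top_coe, Submodule.colon_univ]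

end MvPowerSeries

theorem Fin.range_succ_succ (r : ℕ) :
    Set.range (fun i : Fin r => i.succ.succ) = ({0, 1} : Set (Fin (r + 2)))ᶜ := by
  ext v
  refine ⟨?_, fun hv => ?_⟩
  · rintro ⟨i, rfl⟩
    simp only [Set.mem_compl_iff, Set.mem_insert_iff, Set.mem_singleton_iff, not_or]
    exact ⟨Fin.succ_ne_zero _, fun h => Fin.succ_ne_zero i
      (Fin.succ_injective _ (h.trans Fin.succ_zero_eq_one.symm))⟩
  · simp only [Set.mem_compl_iff, Set.mem_insert_iff, Set.mem_singleton_iff, not_or] at hv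
    obtain ⟨w, rfl⟩ := Fin.exists_succ_eq.2 hv.1
    obtain ⟨u, rfl⟩ := Fin.exists_succ_eq.2 fun h : w = 0 => hv.2 (by rw [h, Fin.succ_zero_eq_one])
    exact ⟨u, rfl⟩

/-- Double-colon filtration of the local model of a `C_{2,n}` cuspidal structure:
`J : (J : I) = I`, `J : (J : I^ℓ) = (x^ℓ, xy, y², z)` for `2 ≤ ℓ ≤ n`, and
`J : (J : I^{n+1}) = J`. -/
theorem stmt_2 (k : Type) [Field k] (n r : ℕ) (hn : 3 ≤ n)
    (x y : MvPowerSeries (Fin (r + 2)) k) (z : Fin r → MvPowerSeries (Fin (r + 2)) k)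
    (hx : x = MvPowerSeries.X 0) (hy : y = MvPowerSeries.X 1)
    (hz : ∀ i : Fin r, z i = MvPowerSeries.X i.succ.succ)
    (I J : Ideal (MvPowerSeries (Fin (r + 2)) k))
    (hI : I = Ideal.span ({x, y} ∪ Set.range z))
    (hJ : J = Ideal.span ({y ^ 2 + x ^ n, x * y} ∪ Set.range z)) :
    Submodule.colon J (Submodule.colon J ((I ^ 1 : Ideal (MvPowerSeries (Fin (r + 2)) k)) : Set (MvPowerSeries (Fin (r + 2)) k))) = I ∧
    (∀ ℓ : ℕ, 2 ≤ ℓ → ℓ ≤ n →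
      Submodule.colon J (Submodule.colon J ((I ^ ℓ : Ideal (MvPowerSeries (Fin (r + 2)) k)) : Set (MvPowerSeries (Fin (r + 2)) k))) =
        Ideal.span ({x ^ ℓ, x * y, y ^ 2} ∪ Set.range z)) ∧
    Submodule.colon J (Submodule.colon J ((I ^ (n + 1) : Ideal (MvPowerSeries (Fin (r + 2)) k)) : Set (MvPowerSeries (Fin (r + 2)) k))) = J := by
  obtain rfl : z = fun i => MvPowerSeries.X i.succ.succ := funext hz
  have hrange : Set.range (fun i : Fin r => (MvPowerSeries.X i.succ.succ :
      MvPowerSeries (Fin (r + 2)) k)) = MvPowerSeries.X '' {0, 1}ᶜ := by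
    rw [← Fin.range_succ_succ, ← Set.range_comp]
    rfl
  subst hx hy hI hJ
  rw [hrange]
  have hab : (0 : Fin (r + 2)) ≠ 1 := by simp
  refine ⟨?_, fun ℓ hℓ hℓn => ?_, ?_⟩
  · rw [pow_one]
    exact MvPowerSeries.cuspIdeal_colon_colon_coordIdeal hab (by omega)
  · exact MvPowerSeries.cuspIdeal_colon_colon_coordIdeal_pow hab hℓ hℓn
  · exact MvPowerSeries.cuspIdeal_colon_colon_coordIdeal_pow_succ hab (by omega)
end

section
/- The quotient (I·I₂)/(I·J₂) is a 2-dimensional k-vector space generated by the classes of xy and y². (This is the local form of the isomorphism E ⊗ K ≅ II₂/IJ₂ used in the proof of the Lemma on C_{2,n} structures.) -/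
/-!
`I` is the maximal ideal of the power series ring (a series without constant term is a
combination of the variables), so modulo `I·J₂` multiplying the classes of `xy, y² ∈ J₂` by a
series only multiplies them by its constant term. Since `I₂` differs from `J₂` only by `y`, and
`I·y ⊆ I·J₂ + (xy, y²)`, these two classes span `I·I₂ / I·J₂`. They are independent: giving `x`
and `y` weight 1 and the `zᵢ` weight 2, every element of `I·J₂` has weighted order at least 3,
while `xy` and `y²` are monomials of weight 2.
-/

/-- For ideals `B ⊆ A` of `R`, the image of `A` in `R ⧸ B`, viewed as a
`k`-submodule of `R ⧸ B`; this represents the subquotient `A/B`. -/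
noncomputable def gradedPiece (k : Type) [Field k] {R : Type} [CommRing R] [Algebra k R]
    (A B : Ideal R) : Submodule k (R ⧸ B) :=
  Submodule.restrictScalars k (A.map (Ideal.Quotient.mk B))

theorem Fin.range_fin_add_two {α : Type*} {n : ℕ} (f : Fin (n + 2) → α) :
    Set.range f = {f 0, f 1} ∪ Set.range fun i : Fin n => f i.succ.succ := by
  rw [Fin.range_fin_succ, Fin.range_fin_succ, Set.insert_union, Set.singleton_union]
  rfl

theorem span_mul_span_le_sup_span {A : Type*} [CommRing A] (x y : A) (Z : Set A) :
    Ideal.span ({x, y} ∪ Z) * Ideal.span ({x ^ 2, y} ∪ Z) ≤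
      Ideal.span ({x, y} ∪ Z) * Ideal.span ({x ^ 2, x * y, y ^ 2} ∪ Z) ⊔
        Ideal.span {x * y, y ^ 2} := by
  rw [Ideal.span_mul_span', Ideal.span_le]
  rintro _ ⟨s, hs, t, ht, rfl⟩
  dsimp only
  have mem_left {a b : A} (ha : a ∈ ({x, y} ∪ Z)) (hb : b ∈ ({x ^ 2, x * y, y ^ 2} ∪ Z)) :
      a * b ∈ Ideal.span ({x, y} ∪ Z) * Ideal.span ({x ^ 2, x * y, y ^ 2} ∪ Z) ⊔
        Ideal.span {x * y, y ^ 2} :=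
    Ideal.mem_sup_left (Ideal.mul_mem_mul (Ideal.subset_span ha) (Ideal.subset_span hb))
  rcases ht with (rfl | rfl) | ht
  · exact mem_left hs (by simp)
  · rcases hs with (rfl | rfl) | hs
    · exact Ideal.mem_sup_right (Ideal.subset_span (by simp))
    · exact Ideal.mem_sup_right (Ideal.subset_span (by simp [sq]))
    · rw [mul_comm s]
      exact mem_left (Or.inl (Or.inr rfl)) (Or.inr hs)
  · exact mem_left hs (Or.inr ht)

theorem gradedPiece_eq_span_pair {k R : Type} [Field k] [CommRing R] [Algebra k R]
    {A B : Ideal R} {a b : R} (hle : A ≤ B ⊔ Ideal.span {a, b}) (ha : a ∈ A) (hb : b ∈ A)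
    (ha' : ∀ p, ∃ c : k, Ideal.Quotient.mk B (p * a) = c • Ideal.Quotient.mk B a)
    (hb' : ∀ p, ∃ c : k, Ideal.Quotient.mk B (p * b) = c • Ideal.Quotient.mk B b) :
    gradedPiece k A B = Submodule.span k {Ideal.Quotient.mk B a, Ideal.Quotient.mk B b} := by
  refine le_antisymm (fun u hu => ?_) (Submodule.span_le.2 ?_)
  · obtain ⟨f, hf, rfl⟩ := (Ideal.mem_map_iff_of_surjective _ Ideal.Quotient.mk_surjective).1 hu
    obtain ⟨g, hg, s, hs, rfl⟩ := Submodule.mem_sup.1 (hle hf)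
    obtain ⟨p, q, rfl⟩ := Ideal.mem_span_pair.1 hs
    obtain ⟨c, hc⟩ := ha' p
    obtain ⟨d, hd⟩ := hb' q
    rw [map_add, map_add, Ideal.Quotient.eq_zero_iff_mem.2 hg, zero_add, hc, hd]
    exact add_mem (Submodule.smul_mem _ _ (Submodule.subset_span (by simp)))
      (Submodule.smul_mem _ _ (Submodule.subset_span (by simp)))
  · rintro _ (rfl | rfl)
    exacts [Ideal.mem_map_of_mem _ ha, Ideal.mem_map_of_mem _ hb]

namespace MvPowerSeries

variable {σ R : Type*}

theorem exists_sum_mul_X_of_constantCoeff_eq_zero [CommSemiring R] [Fintype σ] [LinearOrder σ]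
    {f : MvPowerSeries σ R} (hf : constantCoeff f = 0) :
    ∃ g : σ → MvPowerSeries σ R, ∑ i, g i * X i = f := by
  classical
  let part (i : σ) : MvPowerSeries σ R := fun m => if m.support.min = i then coeff m f else 0
  have coeff_part (i : σ) (m : σ →₀ ℕ) :
      coeff m (part i) = if m.support.min = i then coeff m f else 0 := rfl
  have hdvd (i : σ) : X i ∣ part i := X_dvd_iff.2 fun m hm => by
    rw [coeff_part, if_neg]
    exact fun h => Finsupp.mem_support_iff.1 (Finset.mem_of_min h) hm
  choose g hg using hdvd
  refine ⟨g, ext fun m => ?_⟩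
  simp_rw [map_sum, mul_comm (g _), ← hg, coeff_part]
  cases hmin : m.support.min with
  | top =>
    rw [Finset.min_eq_top, Finsupp.support_eq_empty] at hmin
    simp [hmin, hf]
  | coe i => simp

theorem ker_constantCoeff_eq_span_range_X [CommSemiring R] [Fintype σ] [LinearOrder σ] :
    RingHom.ker (constantCoeff (σ := σ) (R := R)) = Ideal.span (Set.range X) := by
  refine le_antisymm (fun f hf => ?_) (Ideal.span_le.2 ?_)
  · obtain ⟨g, rfl⟩ := exists_sum_mul_X_of_constantCoeff_eq_zero hf
    exact Ideal.mem_span_range_iff_exists_fun.2 ⟨g, rfl⟩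
  · rintro _ ⟨i, rfl⟩
    simp

section WeightedOrder

variable [CommSemiring R] (w : σ → ℕ)

def weightedOrderIdeal (n : ℕ∞) : Ideal (MvPowerSeries σ R) where
  carrier := {f | n ≤ f.weightedOrder w}
  add_mem' hf hg := le_min hf hg |>.trans (min_weightedOrder_le_add w)
  zero_mem' := by simp
  smul_mem' c _ hf := le_add_left hf |>.trans (le_weightedOrder_mul w)

variable {w}

theorem mul_mem_weightedOrderIdeal {m n : ℕ∞} {f g : MvPowerSeries σ R}
    (hf : f ∈ weightedOrderIdeal w m) (hg : g ∈ weightedOrderIdeal w n) :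
    f * g ∈ weightedOrderIdeal w (m + n) :=
  add_le_add hf hg |>.trans (le_weightedOrder_mul w)

theorem weightedOrderIdeal_mul_le (m n : ℕ∞) :
    weightedOrderIdeal w m * weightedOrderIdeal w n ≤
      (weightedOrderIdeal w (m + n) : Ideal (MvPowerSeries σ R)) :=
  Ideal.mul_le.2 fun _ hf _ hg => mul_mem_weightedOrderIdeal hf hg

theorem X_mem_weightedOrderIdeal {n : ℕ∞} {i : σ} (h : n ≤ w i) :
    (X i : MvPowerSeries σ R) ∈ weightedOrderIdeal w n := by
  classical
  refine le_weightedOrder w fun d hd => ?_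
  rw [coeff_X, if_neg]
  rintro rfl
  simp only [Finsupp.weight_single, smul_eq_mul, one_mul] at hd
  exact absurd h (not_le.2 hd)

theorem coeff_eq_zero_of_mem_weightedOrderIdeal {n : ℕ∞} {f : MvPowerSeries σ R} {d : σ →₀ ℕ}
    (hf : f ∈ weightedOrderIdeal w n) (hd : Finsupp.weight w d < n) : coeff d f = 0 :=
  coeff_eq_zero_of_lt_weightedOrder w (hd.trans_le hf)

end WeightedOrder

theorem mk_mul_eq_constantCoeff_smul [CommRing R] {B : Ideal (MvPowerSeries σ R)}
    {w : MvPowerSeries σ R} (hw : ∀ q ∈ RingHom.ker constantCoeff, q * w ∈ B)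
    (p : MvPowerSeries σ R) :
    Ideal.Quotient.mk B (p * w) = constantCoeff p • Ideal.Quotient.mk B w := by
  have : p * w - C (constantCoeff p) * w ∈ B := by
    rw [← sub_mul]
    exact hw _ (by simp)
  rw [Ideal.Quotient.mk_eq_mk_iff_sub_mem _ _ |>.2 this, ← smul_eq_C_mul]
  exact map_smul (Ideal.Quotient.mkₐ R B) _ _

theorem linearIndependent_mk_monomial_pair {k : Type*} [Field k] {w : σ → ℕ} {n : ℕ∞}
    {B : Ideal (MvPowerSeries σ k)} (hB : B ≤ weightedOrderIdeal w n) {d e : σ →₀ ℕ}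
    (hde : d ≠ e) (hd : Finsupp.weight w d < n) (he : Finsupp.weight w e < n) :
    LinearIndependent k
      ![Ideal.Quotient.mk B (monomial d 1), Ideal.Quotient.mk B (monomial e 1)] := by
  classical
  rw [LinearIndependent.pair_iff]
  intro s t hst
  simp only [← Ideal.Quotient.mkₐ_eq_mk k, ← map_smul, ← map_add] at hst
  have hmem := hB (Ideal.Quotient.eq_zero_iff_mem.1 hst)
  constructor
  · simpa [coeff_monomial, hde] using coeff_eq_zero_of_mem_weightedOrderIdeal hmem hd
  · simpa [coeff_monomial, hde.symm] using coeff_eq_zero_of_mem_weightedOrderIdeal hmem he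

end MvPowerSeries

open MvPowerSeries

theorem span_X_mul_span_X_sq_le_weightedOrderIdeal (k : Type*) [Field k] (r : ℕ) :
    Ideal.span ({X 0, X 1} ∪ Set.range fun i : Fin r => X i.succ.succ) *
        Ideal.span ({X 0 ^ 2, X 0 * X 1, X 1 ^ 2} ∪ Set.range fun i : Fin r => X i.succ.succ) ≤
      (weightedOrderIdeal (fun i : Fin (r + 2) => if (i : ℕ) < 2 then 1 else 2) 3 :
        Ideal (MvPowerSeries (Fin (r + 2)) k)) := by
  set w : Fin (r + 2) → ℕ := fun i => if (i : ℕ) < 2 then 1 else 2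
  have hX (i : Fin (r + 2)) : (X i : MvPowerSeries (Fin (r + 2)) k) ∈ weightedOrderIdeal w 1 :=
    X_mem_weightedOrderIdeal (by simp only [w]; split_ifs <;> simp)
  have hZ (i : Fin r) :
      (X i.succ.succ : MvPowerSeries (Fin (r + 2)) k) ∈ weightedOrderIdeal w 2 :=
    X_mem_weightedOrderIdeal (by simp [w])
  have hXX (i j : Fin (r + 2)) :
      (X i * X j : MvPowerSeries (Fin (r + 2)) k) ∈ weightedOrderIdeal w 2 :=
    mul_mem_weightedOrderIdeal (hX i) (hX j)
  refine (Ideal.mul_mono (Ideal.span_le.2 ?_) (Ideal.span_le.2 ?_)).trans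
    (weightedOrderIdeal_mul_le 1 2)
  · rintro _ ((rfl | rfl) | ⟨i, rfl⟩)
    exacts [hX 0, hX 1, hX _]
  · rintro _ ((rfl | rfl | rfl) | ⟨i, rfl⟩)
    exacts [by rw [sq]; exact hXX 0 0, hXX 0 1, by rw [sq]; exact hXX 1 1, hZ i]

theorem stmt_8_general (k : Type) [Field k] (r : ℕ)
    (x y : MvPowerSeries (Fin (r + 2)) k) (z : Fin r → MvPowerSeries (Fin (r + 2)) k)
    (hx : x = MvPowerSeries.X 0) (hy : y = MvPowerSeries.X 1)
    (hz : ∀ i : Fin r, z i = MvPowerSeries.X i.succ.succ)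
    (I I₂ J₂ : Ideal (MvPowerSeries (Fin (r + 2)) k))
    (hI : I = Ideal.span ({x, y} ∪ Set.range z))
    (hI₂ : I₂ = Ideal.span ({x ^ 2, y} ∪ Set.range z))
    (hJ₂ : J₂ = Ideal.span ({x ^ 2, x * y, y ^ 2} ∪ Set.range z)) :
    gradedPiece k (I * I₂) (I * J₂) =
      Submodule.span k {Ideal.Quotient.mk (I * J₂) (x * y),
        Ideal.Quotient.mk (I * J₂) (y ^ 2)} ∧
    Module.finrank k (gradedPiece k (I * I₂) (I * J₂)) = 2 := by
  obtain rfl : z = fun i => X i.succ.succ := funext hz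
  subst hx hy
  have hI_ker : I = RingHom.ker constantCoeff := by
    rw [hI, ker_constantCoeff_eq_span_range_X, Fin.range_fin_add_two]
  have hJ₂_mem {v} (hv : v ∈ ({X 0 ^ 2, X 0 * X 1, X 1 ^ 2} : Set _)) : v ∈ J₂ :=
    hJ₂ ▸ Ideal.subset_span (Or.inl hv)
  have hscalar {v} (hv : v ∈ J₂) (p : MvPowerSeries (Fin (r + 2)) k) :
      ∃ c : k, Ideal.Quotient.mk (I * J₂) (p * v) = c • Ideal.Quotient.mk (I * J₂) v :=
    ⟨_, mk_mul_eq_constantCoeff_smul (fun q hq => Ideal.mul_mem_mul (hI_ker ▸ hq) hv) p⟩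
  have hspan : gradedPiece k (I * I₂) (I * J₂) = Submodule.span k
      {Ideal.Quotient.mk (I * J₂) (X 0 * X 1), Ideal.Quotient.mk (I * J₂) (X 1 ^ 2)} := by
    refine gradedPiece_eq_span_pair ?_ ?_ ?_ (hscalar (hJ₂_mem (by simp)))
      (hscalar (hJ₂_mem (by simp)))
    · rw [hI, hI₂, hJ₂]
      exact span_mul_span_le_sup_span _ _ _
    all_goals rw [hI, hI₂]
    · exact Ideal.mul_mem_mul (Ideal.subset_span (by simp)) (Ideal.subset_span (by simp))
    · rw [sq (X 1)]
      exact Ideal.mul_mem_mul (Ideal.subset_span (by simp)) (Ideal.subset_span (by simp))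
  refine ⟨hspan, ?_⟩
  have hxy : (X 0 * X 1 : MvPowerSeries (Fin (r + 2)) k) =
      monomial (Finsupp.single 0 1 + Finsupp.single 1 1) 1 := by
    rw [X_def, X_def, monomial_mul_monomial, one_mul]
  have hindep : LinearIndependent k
      ![Ideal.Quotient.mk (I * J₂) (X 0 * X 1), Ideal.Quotient.mk (I * J₂) (X 1 ^ 2)] := by
    rw [hxy, X_pow_eq]
    refine linearIndependent_mk_monomial_pair
      (hI ▸ hJ₂ ▸ span_X_mul_span_X_sq_le_weightedOrderIdeal k r)
      (fun h => by simpa using DFunLike.congr_fun h 0) ?_ ?_ <;>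
    norm_num [Finsupp.weight_single]
  rw [hspan, ← Matrix.range_cons_cons_empty, finrank_span_eq_card hindep, Fintype.card_fin]

/-- In the local model of a `C_{2,n}` cuspidal structure, the subquotient
`(I·I₂)/(I·J₂)` is a 2-dimensional `k`-vector space generated by the classes of
`xy` and `y²` (local form of `E ⊗ K ≅ II₂/IJ₂`). -/
theorem stmt_8 (k : Type) [Field k] (n r : ℕ) (hn : 3 ≤ n)
    (x y : MvPowerSeries (Fin (r + 2)) k) (z : Fin r → MvPowerSeries (Fin (r + 2)) k)
    (hx : x = MvPowerSeries.X 0) (hy : y = MvPowerSeries.X 1)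
    (hz : ∀ i : Fin r, z i = MvPowerSeries.X i.succ.succ)
    (I J I₂ J₂ : Ideal (MvPowerSeries (Fin (r + 2)) k))
    (hI : I = Ideal.span ({x, y} ∪ Set.range z))
    (hJ : J = Ideal.span ({y ^ 2 + x ^ n, x * y} ∪ Set.range z))
    (hI₂ : I₂ = Ideal.span ({x ^ 2, y} ∪ Set.range z))
    (hJ₂ : J₂ = Ideal.span ({x ^ 2, x * y, y ^ 2} ∪ Set.range z)) :
    gradedPiece k (I * I₂) (I * J₂) =
      Submodule.span k {Ideal.Quotient.mk (I * J₂) (x * y),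
        Ideal.Quotient.mk (I * J₂) (y ^ 2)} ∧
    Module.finrank k (gradedPiece k (I * I₂) (I * J₂)) = 2 :=
  stmt_8_general k r x y z hx hy hz I I₂ J₂ hI hI₂ hJ₂
end

section
/- Set I_{n−1} = (x^{n−1}, y, z₁, …, z_r) and J_{n−1} = (x^{n−1}, xy, y², z₁, …, z_r). Then the quotient (I₂·I_{n−1})/(I₂·J_{n−1} + I_{n−1}·J₂) is a 1-dimensional k-vector space generated by the class of y². (This is the local form of the isomorphism K ⊗ K ≅ I₂I_{n−1}/(I₂J_{n−1} + I_{n−1}J₂) used in Step n+1 of the construction theorem for C_{2,n} structures.) -/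
/-!
Write `B = I₂ J_{n-1} + I_{n-1} J₂`. Of the products of generators of `I₂` and `I_{n-1}`, all but
`y · y` already lie in `B`, and `𝔪 y² ⊆ B` for the maximal ideal `𝔪 = (x, y, z)`, because
`x y² = y · xy`, `y · y²` and `z y²` lie in `I₂ J_{n-1}`. As every power series is a constant modulo
`𝔪`, the subquotient `I₂ I_{n-1} / B` is spanned by the class of `y²`. This class is nonzero:
killing `x` and `z` maps `I₂, I_{n-1}` into `(y)` and `J₂, J_{n-1}` into `(y²)`, hence `B` into
`(y³)`, which does not contain `y²`.
-/

open MvPowerSeries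

theorem gradedPiece_eq_span_singleton {k R : Type} [Field k] [CommRing R] [Algebra k R]
    {A B 𝔪 : Ideal R} {g : R} (h𝔪 : ∀ f : R, ∃ c : k, f - algebraMap k R c ∈ 𝔪)
    (hgA : g ∈ A) (hA : A ≤ B + Ideal.span {g}) (h𝔪g : 𝔪 * Ideal.span {g} ≤ B) :
    gradedPiece k A B = Submodule.span k {Ideal.Quotient.mk B g} := by
  refine le_antisymm (fun ξ hξ => ?_) (Submodule.span_le.mpr ?_)
  · obtain ⟨a, haA, rfl⟩ :=
      (Ideal.mem_map_iff_of_surjective _ Ideal.Quotient.mk_surjective).mp hξ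
    obtain ⟨b, hb, _, hfg, rfl⟩ := Submodule.mem_sup.mp (hA haA)
    obtain ⟨f, rfl⟩ := Ideal.mem_span_singleton'.mp hfg
    obtain ⟨c, hc⟩ := h𝔪 f
    have hclass : Ideal.Quotient.mk B (b + f * g) = c • Ideal.Quotient.mk B g := by
      rw [← Ideal.Quotient.mkₐ_eq_mk k, ← map_smul, Ideal.Quotient.mkₐ_eq_mk,
        Ideal.Quotient.mk_eq_mk_iff_sub_mem, Algebra.smul_def, add_sub_assoc, ← sub_mul]
      exact add_mem hb (h𝔪g (Ideal.mul_mem_mul hc (Ideal.mem_span_singleton_self g)))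
    exact hclass ▸ Submodule.smul_mem _ c (Submodule.mem_span_singleton_self _)
  · rintro _ rfl
    exact Ideal.mem_map_of_mem _ hgA

section CuspIdeals

variable {R : Type*} [CommRing R] (x y : R) {ι : Type*} (z : ι → R)

def idealI (a : ℕ) : Ideal R := Ideal.span ({x ^ a, y} ∪ Set.range z)

def idealJ (a : ℕ) : Ideal R := Ideal.span ({x ^ a, x * y, y ^ 2} ∪ Set.range z)

variable (a b : ℕ)

theorem sq_mem_idealI_mul_idealI : y ^ 2 ∈ idealI x y z a * idealI x y z b :=
  pow_two y ▸ Ideal.mul_mem_mul (Ideal.subset_span (by simp)) (Ideal.subset_span (by simp))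

theorem idealI_mul_idealI_le :
    idealI x y z a * idealI x y z b ≤
      idealI x y z a * idealJ x y z b + idealI x y z b * idealJ x y z a + Ideal.span {y ^ 2} := by
  simp only [Ideal.add_eq_sup]
  have hIJ {u v : R} (hu : u ∈ ({x ^ a, y} ∪ Set.range z : Set R))
      (hv : v ∈ ({x ^ b, x * y, y ^ 2} ∪ Set.range z : Set R)) :
      u * v ∈ idealI x y z a * idealJ x y z b ⊔ idealI x y z b * idealJ x y z a ⊔
        Ideal.span {y ^ 2} :=
    Ideal.mem_sup_left <| Ideal.mem_sup_left <| show u * v ∈ idealI x y z a * idealJ x y z b from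
      Ideal.mul_mem_mul (Ideal.subset_span hu) (Ideal.subset_span hv)
  have hJI {u v : R} (hu : u ∈ ({x ^ a, x * y, y ^ 2} ∪ Set.range z : Set R))
      (hv : v ∈ ({x ^ b, y} ∪ Set.range z : Set R)) :
      u * v ∈ idealI x y z a * idealJ x y z b ⊔ idealI x y z b * idealJ x y z a ⊔
        Ideal.span {y ^ 2} :=
    mul_comm v u ▸ Ideal.mem_sup_left (Ideal.mem_sup_right <|
      show v * u ∈ idealI x y z b * idealJ x y z a from
        Ideal.mul_mem_mul (Ideal.subset_span hv) (Ideal.subset_span hu))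
  rw [idealI, idealI, Ideal.span_mul_span', Ideal.span_le, Set.mul_subset_iff]
  simp only [Set.mem_union, Set.mem_insert_iff, Set.mem_singleton_iff, Set.mem_range, or_imp,
    forall_eq, forall_exists_index, forall_apply_eq_imp_iff, forall_and, SetLike.mem_coe]
  refine ⟨⟨⟨⟨?_, ?_⟩, fun i => ?_⟩, ⟨?_, ?_⟩, fun i => ?_⟩, ⟨fun j => ?_, fun j => ?_⟩,
    fun i j => ?_⟩
  · exact hIJ (by simp) (by simp)
  · exact hIJ (by simp) (by simp)
  · exact hIJ (by simp) (by simp)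
  · exact hJI (by simp) (by simp)
  · exact Ideal.mem_sup_right (Ideal.subset_span (pow_two y).symm)
  · exact hJI (by simp) (by simp)
  · exact hIJ (by simp) (by simp)
  · exact hIJ (by simp) (by simp)
  · exact hIJ (by simp) (by simp)

theorem idealI_one_mul_span_sq_le :
    idealI x y z 1 * Ideal.span {y ^ 2} ≤ idealI x y z a * idealJ x y z b := by
  have hy : y ∈ idealI x y z a := Ideal.subset_span (by simp)
  rw [idealI, Ideal.span_mul_span', Ideal.span_le, Set.mul_subset_iff]
  simp only [Set.mem_union, Set.mem_insert_iff, Set.mem_singleton_iff, Set.mem_range, or_imp,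
    forall_eq, forall_exists_index, forall_apply_eq_imp_iff, forall_and, SetLike.mem_coe]
  refine ⟨⟨?_, ?_⟩, fun i => ?_⟩
  · rw [show x ^ 1 * y ^ 2 = y * (x * y) by ring]
    exact Ideal.mul_mem_mul hy (Ideal.subset_span (by simp))
  · exact Ideal.mul_mem_mul hy (Ideal.subset_span (by simp))
  · exact Ideal.mul_mem_mul (Ideal.subset_span (by simp)) (Ideal.subset_span (by simp))

theorem sq_notMem_of_ringHom {S : Type*} [CommRing S] (φ : R →+* S) (hx : φ x = 0)
    (hz : ∀ i, φ (z i) = 0) {a b : ℕ} (ha : a ≠ 0) (hb : b ≠ 0) (hy : ¬ φ y ^ 3 ∣ φ y ^ 2) :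
    y ^ 2 ∉ idealI x y z a * idealJ x y z b + idealI x y z b * idealJ x y z a := by
  have hI {c : ℕ} (hc : c ≠ 0) : (idealI x y z c).map φ ≤ Ideal.span {φ y} := by
    rw [idealI, Ideal.map_span, Ideal.span_le]
    rintro _ ⟨u, hu, rfl⟩
    simp only [Set.mem_union, Set.mem_insert_iff, Set.mem_singleton_iff, Set.mem_range] at hu
    rcases hu with (rfl | rfl) | ⟨i, rfl⟩ <;> simp [hx, hz, hc]
  have hJ {c : ℕ} (hc : c ≠ 0) : (idealJ x y z c).map φ ≤ Ideal.span {φ y ^ 2} := by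
    rw [idealJ, Ideal.map_span, Ideal.span_le]
    rintro _ ⟨u, hu, rfl⟩
    simp only [Set.mem_union, Set.mem_insert_iff, Set.mem_singleton_iff, Set.mem_range] at hu
    rcases hu with (rfl | rfl | rfl) | ⟨i, rfl⟩ <;> simp [hx, hz, hc]
  have hmap : (idealI x y z a * idealJ x y z b + idealI x y z b * idealJ x y z a).map φ ≤
      Ideal.span {φ y ^ 3} := by
    rw [Ideal.add_eq_sup, Ideal.map_sup, Ideal.map_mul, Ideal.map_mul, pow_succ',
      ← Ideal.span_singleton_mul_span_singleton]
    exact sup_le (Ideal.mul_mono (hI ha) (hJ hb)) (Ideal.mul_mono (hI hb) (hJ ha))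
  intro hmem
  exact hy (Ideal.mem_span_singleton.mp (hmap (by simpa using Ideal.mem_map_of_mem φ hmem)))

end CuspIdeals

namespace MvPowerSeries

section

variable {σ R : Type*} [CommRing R]

theorem mem_span_X_image_of_coeff_eq_zero (s : Finset σ) {f : MvPowerSeries σ R}
    (hf : ∀ e : σ →₀ ℕ, (∀ i ∈ s, e i = 0) → coeff e f = 0) :
    f ∈ Ideal.span (X '' s) := by
  classical
  induction s using Finset.induction_on generalizing f with
  | empty =>
    obtain rfl : f = 0 := ext fun e => by simpa using hf e
    exact zero_mem _
  | @insert a s _ ih =>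
    -- `f'` keeps the monomials of `f` not divisible by `X a`
    let f' : MvPowerSeries σ R := fun e => if e a = 0 then coeff e f else 0
    have hf' : f' ∈ Ideal.span (X '' s) := ih fun e he => by
      change ite _ _ _ = 0
      split_ifs with hea
      · exact hf e (by simpa [hea] using he)
      · rfl
    obtain ⟨q, hq⟩ : X a ∣ f - f' := X_dvd_iff.mpr fun e hea => by
      change coeff e f - ite _ _ _ = 0
      simp [hea]
    rw [← sub_add_cancel f f', hq, Finset.coe_insert, Set.image_insert_eq]
    refine add_mem (Ideal.mul_mem_right _ _ (Ideal.subset_span (Set.mem_insert _ _))) ?_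
    exact Ideal.span_mono (Set.subset_insert _ _) hf'

theorem sub_C_constantCoeff_mem_span_range_X [Finite σ] (f : MvPowerSeries σ R) :
    f - C (constantCoeff f) ∈ Ideal.span (Set.range X) := by
  have := Fintype.ofFinite σ
  rw [← Set.image_univ, ← Finset.coe_univ]
  refine mem_span_X_image_of_coeff_eq_zero _ fun e he => ?_
  obtain rfl : e = 0 := Finsupp.ext fun i => he i (Finset.mem_univ i)
  simp

end

variable {R : Type*} [CommRing R] {r : ℕ}
  {x y : MvPowerSeries (Fin (r + 2)) R} {z : Fin r → MvPowerSeries (Fin (r + 2)) R}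

theorem span_range_X_le_idealI_one (hx : x = X 0) (hy : y = X 1)
    (hz : ∀ i, z i = X i.succ.succ) : Ideal.span (Set.range X) ≤ idealI x y z 1 := by
  subst hx hy
  rw [Ideal.span_le, Set.range_subset_iff]
  exact Fin.cases (Ideal.subset_span (by simp))
    (Fin.cases (Ideal.subset_span (by simp)) fun i => Ideal.subset_span (by simp [hz]))

theorem sq_notMem_idealI_mul_idealJ_add [Nontrivial R] (hx : x = X 0) (hy : y = X 1)
    (hz : ∀ i, z i = X i.succ.succ) {a b : ℕ} (ha : a ≠ 0) (hb : b ≠ 0) :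
    y ^ 2 ∉ idealI x y z a * idealJ x y z b + idealI x y z b * idealJ x y z a := by
  subst hx hy
  obtain rfl : z = fun i => X i.succ.succ := funext hz
  let e : Unit ↪ Fin (r + 2) := ⟨fun _ => 1, fun _ _ _ => rfl⟩
  have hkill {i : Fin (r + 2)} (hi : i ≠ 1) : killCompl (R := R) e (X i) = 0 :=
    killCompl_X_eq_zero fun ⟨_, h⟩ => hi h.symm
  refine sq_notMem_of_ringHom _ _ _ (killCompl (R := R) e).toRingHom (hkill (by simp))
    (fun i => hkill (by simp [Fin.ext_iff])) ha hb ?_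
  rw [AlgHom.toRingHom_eq_coe, RingHom.coe_coe, show (1 : Fin (r + 2)) = e () from rfl,
    killCompl_X, X_pow_dvd_iff]
  intro h
  simpa [coeff_X_pow] using h (Finsupp.single () 2) (by simp)

end MvPowerSeries

theorem stmt_10_general (k : Type) [Field k] (n r : ℕ) (hn : 3 ≤ n)
    (x y : MvPowerSeries (Fin (r + 2)) k) (z : Fin r → MvPowerSeries (Fin (r + 2)) k)
    (hx : x = MvPowerSeries.X 0) (hy : y = MvPowerSeries.X 1)
    (hz : ∀ i : Fin r, z i = MvPowerSeries.X i.succ.succ)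
    (I₂ J₂ Iₙ₁ Jₙ₁ : Ideal (MvPowerSeries (Fin (r + 2)) k))
    (hI₂ : I₂ = Ideal.span ({x ^ 2, y} ∪ Set.range z))
    (hJ₂ : J₂ = Ideal.span ({x ^ 2, x * y, y ^ 2} ∪ Set.range z))
    (hIₙ₁ : Iₙ₁ = Ideal.span ({x ^ (n - 1), y} ∪ Set.range z))
    (hJₙ₁ : Jₙ₁ = Ideal.span ({x ^ (n - 1), x * y, y ^ 2} ∪ Set.range z)) :
    gradedPiece k (I₂ * Iₙ₁) (I₂ * Jₙ₁ + Iₙ₁ * J₂) =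
      Submodule.span k {Ideal.Quotient.mk (I₂ * Jₙ₁ + Iₙ₁ * J₂) (y ^ 2)} ∧
    Module.finrank k (gradedPiece k (I₂ * Iₙ₁) (I₂ * Jₙ₁ + Iₙ₁ * J₂)) = 1 := by
  obtain rfl : I₂ = idealI x y z 2 := hI₂
  obtain rfl : J₂ = idealJ x y z 2 := hJ₂
  obtain rfl : Iₙ₁ = idealI x y z (n - 1) := hIₙ₁
  obtain rfl : Jₙ₁ = idealJ x y z (n - 1) := hJₙ₁
  have hspan := gradedPiece_eq_span_singleton (k := k)
    (fun f => ⟨constantCoeff f,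
      span_range_X_le_idealI_one hx hy hz (sub_C_constantCoeff_mem_span_range_X f)⟩)
    (sq_mem_idealI_mul_idealI x y z 2 (n - 1)) (idealI_mul_idealI_le x y z 2 (n - 1))
    ((idealI_one_mul_span_sq_le x y z 2 (n - 1)).trans le_sup_left)
  refine ⟨hspan, hspan ▸ finrank_span_singleton ?_⟩
  exact Ideal.Quotient.eq_zero_iff_mem.not.mpr
    (sq_notMem_idealI_mul_idealJ_add hx hy hz (by omega) (by omega))

/-- In the local model of a `C_{2,n}` cuspidal structure, with
`I_{n−1} = (x^{n−1}, y, z)` and `J_{n−1} = (x^{n−1}, xy, y², z)`, the subquotient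
`(I₂·I_{n−1})/(I₂·J_{n−1} + I_{n−1}·J₂)` is a 1-dimensional `k`-vector space
generated by the class of `y²` (local form of
`K ⊗ K ≅ I₂I_{n−1}/(I₂J_{n−1} + I_{n−1}J₂)`). -/
theorem stmt_10 (k : Type) [Field k] (n r : ℕ) (hn : 3 ≤ n)
    (x y : MvPowerSeries (Fin (r + 2)) k) (z : Fin r → MvPowerSeries (Fin (r + 2)) k)
    (hx : x = MvPowerSeries.X 0) (hy : y = MvPowerSeries.X 1)
    (hz : ∀ i : Fin r, z i = MvPowerSeries.X i.succ.succ)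
    (I J I₂ J₂ Iₙ₁ Jₙ₁ : Ideal (MvPowerSeries (Fin (r + 2)) k))
    (hI : I = Ideal.span ({x, y} ∪ Set.range z))
    (hJ : J = Ideal.span ({y ^ 2 + x ^ n, x * y} ∪ Set.range z))
    (hI₂ : I₂ = Ideal.span ({x ^ 2, y} ∪ Set.range z))
    (hJ₂ : J₂ = Ideal.span ({x ^ 2, x * y, y ^ 2} ∪ Set.range z))
    (hIₙ₁ : Iₙ₁ = Ideal.span ({x ^ (n - 1), y} ∪ Set.range z))
    (hJₙ₁ : Jₙ₁ = Ideal.span ({x ^ (n - 1), x * y, y ^ 2} ∪ Set.range z)) :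
    gradedPiece k (I₂ * Iₙ₁) (I₂ * Jₙ₁ + Iₙ₁ * J₂) =
      Submodule.span k {Ideal.Quotient.mk (I₂ * Jₙ₁ + Iₙ₁ * J₂) (y ^ 2)} ∧
    Module.finrank k (gradedPiece k (I₂ * Iₙ₁) (I₂ * Jₙ₁ + Iₙ₁ * J₂)) = 1 :=
  stmt_10_general k n r hn x y z hx hy hz I₂ J₂ Iₙ₁ Jₙ₁ hI₂ hJ₂ hIₙ₁ hJₙ₁
end
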